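/- The cones of the type B₂ g-vector fan cover ℝ²: the six maximal cones spanned by the consecutive pairs of g-vectors (1,0),(0,1); (0,1),(−1,2); (−1,2),(−1,1); (−1,1),(−1,0); (−1,0),(0,−1); (0,−1),(1,0) have union equal to ℝ², and the interiors of distinct maximal cones are disjoint. -/
import Mathlib


/-- The closed cone spanned by two vectors in ℝ². -/
def cone (u v : ℝ × ℝ) : Set (ℝ × ℝ) :=
  {p | ∃ s t : ℝ, 0 ≤ s ∧ 0 ≤ t ∧ p = s • u + t • v}

/-- The interior (open cone) spanned by two vectors in ℝ². -/
def openCone (u v : ℝ × ℝ) : Set (ℝ × ℝ) :=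
  {p | ∃ s t : ℝ, 0 < s ∧ 0 < t ∧ p = s • u + t • v}

/-- The g-vectors of the type B₂ cluster algebra, cyclically ordered. -/
noncomputable def gB2 : Fin 6 → ℝ × ℝ :=
  ![(1, 0), (0, 1), (-1, 2), (-1, 1), (-1, 0), (0, -1)]

private lemma pair_eq (s t a b c d x y : ℝ) (h1 : x = s * a + t * c)
    (h2 : y = s * b + t * d) : (x, y) = s • ((a, b) : ℝ × ℝ) + t • (c, d) := by
  simp only [Prod.smul_mk, Prod.mk_add_mk, smul_eq_mul, Prod.mk.injEq]
  exact ⟨h1, h2⟩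

private lemma m5 :
    (![((1:ℝ), (0:ℝ)), (0, 1), (-1, 2), (-1, 1), (-1, 0), (0, -1)]) (5 : Fin 6) = (0, -1) :=
  rfl

/-- Completeness of the type B₂ g-vector fan: the six maximal cones spanned by
consecutive g-vectors cover ℝ², and their interiors are pairwise disjoint. -/
theorem typeB2_fan_complete :
    (⋃ i : Fin 6, cone (gB2 i) (gB2 (i + 1))) = Set.univ ∧
    ∀ i j : Fin 6, i ≠ j →
      openCone (gB2 i) (gB2 (i + 1)) ∩ openCone (gB2 j) (gB2 (j + 1)) = ∅ := by
  constructor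
  · ext ⟨x, y⟩
    simp only [Set.mem_iUnion, Set.mem_univ, iff_true]
    rcases le_total 0 x with hx | hx
    · rcases le_total 0 y with hy | hy
      · exact ⟨0, x, y, hx, hy,
          pair_eq x y 1 0 0 1 x y (by ring) (by ring)⟩
      · exact ⟨5, -y, x, by linarith, hx,
          pair_eq (-y) x 0 (-1) 1 0 x y (by ring) (by ring)⟩
    · rcases le_total 0 y with hy | hy
      · rcases le_total 0 (x + y) with hxy | hxy
        · rcases le_total 0 (2 * x + y) with h2 | h2
          · exact ⟨1, 2 * x + y, -x, h2, by linarith,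
              pair_eq (2 * x + y) (-x) 0 1 (-1) 2 x y (by ring) (by ring)⟩
          · exact ⟨2, x + y, -2 * x - y, hxy, by linarith,
              pair_eq (x + y) (-2 * x - y) (-1) 2 (-1) 1 x y (by ring) (by ring)⟩
        · exact ⟨3, y, -x - y, hy, by linarith,
            pair_eq y (-x - y) (-1) 1 (-1) 0 x y (by ring) (by ring)⟩
      · exact ⟨4, -x, -y, by linarith, by linarith,
          pair_eq (-x) (-y) (-1) 0 0 (-1) x y (by ring) (by ring)⟩
  · intro i j hij
    ext ⟨x, y⟩
    simp only [Set.mem_inter_iff, Set.mem_empty_iff_false, iff_false, not_and]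
    fin_cases i <;> fin_cases j <;>
      first
      | exact absurd rfl hij
      | (rintro ⟨s, t, hs, ht, h⟩ ⟨s', t', hs', ht', h'⟩
         obtain ⟨h1, h2⟩ := Prod.ext_iff.1 h
         obtain ⟨h3, h4⟩ := Prod.ext_iff.1 h'
         simp [gB2, m5] at h1 h2 h3 h4
         linarith)
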